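/- arXiv:1012.2648 — 8 statements merged into one kernel-verified Lean document; each statement's English description precedes it below -/
import Mathlib

section
/- Let Σ be an alphabet, let a, b, c ∈ Σ be pairwise distinct letters, and let A₁, A₂ be nonempty languages over Σ none of whose words contain the letter c. Then there exist languages X, Y over Σ with X · {[c]} · Y = {[a]}·{[c]}·A₁ ∪ {[b]}·{[c]}·A₂ if and only if A₁ = A₂. -/
lemma key_split {α : Type} {a c : α} (hac : a ≠ c) {x y w : List α} (hw : c ∉ w)
    (h : x ++ [c] ++ y = [a] ++ [c] ++ w) : x = [a] ∧ y = w := by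
  match x with
  | [] => simp at h; exact absurd h.1.symm hac
  | [d] => simp at h; exact ⟨by rw [h.1], h.2⟩
  | d :: e :: x'' =>
    simp at h
    obtain ⟨hd, he, hrest⟩ := h
    exact absurd (hrest ▸ (by simp : c ∈ x'' ++ c :: y)) hw

lemma mem_trip {α : Type} {d c : α} {A : Language α} {u : List α} :
    u ∈ ({[d]} : Language α) * ({[c]} : Language α) * A ↔
      ∃ w ∈ A, u = [d] ++ [c] ++ w := by
  constructor
  · rintro ⟨p, ⟨x, rfl, y, rfl, rfl⟩, w, hw, rfl⟩
    exact ⟨w, hw, rfl⟩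
  · rintro ⟨w, hw, rfl⟩
    exact ⟨[d] ++ [c], ⟨[d], rfl, [c], rfl, rfl⟩, w, hw, rfl⟩

theorem local_typing_iff_equiv {α : Type} (a b c : α)
    (hab : a ≠ b) (hac : a ≠ c) (hbc : b ≠ c)
    (A₁ A₂ : Language α) (h₁ : ∃ w, w ∈ A₁) (h₂ : ∃ w, w ∈ A₂)
    (hc₁ : ∀ w ∈ A₁, c ∉ w) (hc₂ : ∀ w ∈ A₂, c ∉ w) :
    (∃ X Y : Language α,
        X * ({[c]} : Language α) * Y =
          ({[a]} : Language α) * ({[c]} : Language α) * A₁ ⊔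
          ({[b]} : Language α) * ({[c]} : Language α) * A₂) ↔ A₁ = A₂ := by
  constructor
  · rintro ⟨X, Y, hXY⟩
    -- Step 1: [a] ∈ X, [b] ∈ X, A₁ ⊆ Y, A₂ ⊆ Y
    have hmem : ∀ u, u ∈ X * ({[c]} : Language α) * Y ↔
        (∃ w ∈ A₁, u = [a] ++ [c] ++ w) ∨ (∃ w ∈ A₂, u = [b] ++ [c] ++ w) := by
      intro u
      rw [hXY]
      constructor
      · rintro (h | h)
        · exact Or.inl (mem_trip.mp h)
        · exact Or.inr (mem_trip.mp h)
      · rintro (h | h)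
        · exact Or.inl (mem_trip.mpr h)
        · exact Or.inr (mem_trip.mpr h)
    have hmemL : ∀ x ∈ X, ∀ y ∈ Y, x ++ [c] ++ y ∈ X * ({[c]} : Language α) * Y := by
      intro x hx y hy
      exact ⟨x ++ [c], ⟨x, hx, [c], rfl, rfl⟩, y, hy, rfl⟩
    -- A₁ ⊆ Y and [a] ∈ X
    have haX : [a] ∈ X ∧ A₁ ≤ Y := by
      obtain ⟨w₁, hw₁⟩ := h₁
      constructor
      · obtain ⟨x, hx, y, hy, hxy⟩ : ∃ x ∈ X, ∃ y ∈ Y, x ++ [c] ++ y = [a] ++ [c] ++ w₁ := by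
          have := (hmem ([a] ++ [c] ++ w₁)).mpr (Or.inl ⟨w₁, hw₁, rfl⟩)
          obtain ⟨p, hp, y, hy, hpy⟩ := this
          obtain ⟨x, hx, cc, hcc, rfl⟩ := hp
          rw [hcc] at *
          exact ⟨x, hx, y, hy, hpy⟩
        obtain ⟨hxa, _⟩ := key_split hac (hc₁ w₁ hw₁) hxy
        exact hxa ▸ hx
      · intro w hw
        have := (hmem ([a] ++ [c] ++ w)).mpr (Or.inl ⟨w, hw, rfl⟩)
        obtain ⟨p, hp, y, hy, hpy⟩ := this
        obtain ⟨x, hx, cc, hcc, rfl⟩ := hp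
        subst hcc
        obtain ⟨_, hyw⟩ := key_split hac (hc₁ w hw) hpy
        exact hyw ▸ hy
    have hbX : [b] ∈ X ∧ A₂ ≤ Y := by
      obtain ⟨w₂, hw₂⟩ := h₂
      constructor
      · have := (hmem ([b] ++ [c] ++ w₂)).mpr (Or.inr ⟨w₂, hw₂, rfl⟩)
        obtain ⟨p, hp, y, hy, hpy⟩ := this
        obtain ⟨x, hx, cc, hcc, rfl⟩ := hp
        subst hcc
        obtain ⟨hxb, _⟩ := key_split hbc (hc₂ w₂ hw₂) hpy
        exact hxb ▸ hx
      · intro w hw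
        have := (hmem ([b] ++ [c] ++ w)).mpr (Or.inr ⟨w, hw, rfl⟩)
        obtain ⟨p, hp, y, hy, hpy⟩ := this
        obtain ⟨x, hx, cc, hcc, rfl⟩ := hp
        subst hcc
        obtain ⟨_, hyw⟩ := key_split hbc (hc₂ w hw) hpy
        exact hyw ▸ hy
    -- Y ⊆ A₁ and Y ⊆ A₂
    have hYA₁ : Y ≤ A₁ := by
      intro y hy
      have := (hmem ([a] ++ [c] ++ y)).mp (hmemL [a] haX.1 y hy)
      rcases this with ⟨w, hw, heq⟩ | ⟨w, hw, heq⟩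
      · simp at heq; exact heq ▸ hw
      · simp at heq; exact absurd heq.1 hab
    have hYA₂ : Y ≤ A₂ := by
      intro y hy
      have := (hmem ([b] ++ [c] ++ y)).mp (hmemL [b] hbX.1 y hy)
      rcases this with ⟨w, hw, heq⟩ | ⟨w, hw, heq⟩
      · simp at heq; exact absurd heq.1.symm hab
      · simp at heq; exact heq ▸ hw
    exact le_antisymm (le_trans haX.2 hYA₂) (le_trans hbX.2 hYA₁)
  · rintro rfl
    refine ⟨({[a]} : Language α) + {[b]}, A₁, ?_⟩
    show (({[a]} : Language α) + {[b]}) * {[c]} * A₁ =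
      ({[a]} : Language α) * {[c]} * A₁ + ({[b]} : Language α) * {[c]} * A₁
    rw [add_mul, add_mul]
end

section
/- Let Σ be an alphabet, a, b, c ∈ Σ pairwise distinct, and A a nonempty language none of whose words contain c. Set L = ({[a]} ∪ {[b]}) · {[c]} · A. Then the pair (X₀, Y₀) = ({[a],[b]}, A) satisfies X₀ · {[c]} · Y₀ = L, and for every pair of nonempty languages X, Y with X · {[c]} · Y ⊆ L we have X ⊆ {[a],[b]} and Y ⊆ A. -/
namespace Language

variable {α : Type*}

theorem mem_mul_singleton_mul {X Y : Language α} {c : α} {w : List α} :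
    w ∈ X * {[c]} * Y ↔ ∃ x ∈ X, ∃ y ∈ Y, x ++ c :: y = w := by
  simp only [mem_mul]
  constructor
  · rintro ⟨_, ⟨x, hx, _, rfl, rfl⟩, y, hy, rfl⟩
    exact ⟨x, hx, y, hy, by simp⟩
  · rintro ⟨x, hx, y, hy, rfl⟩
    exact ⟨x ++ [c], ⟨x, hx, [c], rfl, rfl⟩, y, hy, by simp⟩

/-- The words of `U * {[c]} * V` contain `c` exactly once, so they factor only at that letter. -/
theorem le_and_le_of_mul_singleton_mul_le {X Y U V : Language α} {c : α}
    (hU : ∀ u ∈ U, c ∉ u) (hV : ∀ v ∈ V, c ∉ v)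
    (hX : ∃ x, x ∈ X) (hY : ∃ y, y ∈ Y) (h : X * {[c]} * Y ≤ U * {[c]} * V) :
    X ≤ U ∧ Y ≤ V := by
  have factors : ∀ x ∈ X, ∀ y ∈ Y, x ∈ U ∧ y ∈ V := by
    intro x hx y hy
    obtain ⟨u, hu, v, hv, huv⟩ :=
      mem_mul_singleton_mul.1 (h (mem_mul_singleton_mul.2 ⟨x, hx, y, hy, rfl⟩))
    obtain ⟨rfl, -, rfl⟩ := (List.append_cons_inj_of_notMem (hU u hu) (hV v hv)).1 huv
    exact ⟨hu, hv⟩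
  obtain ⟨x, hx⟩ := hX
  obtain ⟨y, hy⟩ := hY
  exact ⟨fun x' hx' => (factors x' hx' y hy).1, fun y' hy' => (factors x hx y' hy').2⟩

end Language

theorem perfect_typing_gadget_general {α : Type} (a b c : α)
    (hac : a ≠ c) (hbc : b ≠ c)
    (A : Language α) (hcA : ∀ w ∈ A, c ∉ w) :
    (({[a]} : Language α) ⊔ {[b]}) * ({[c]} : Language α) * A =
      (({[a]} : Language α) ⊔ {[b]}) * ({[c]} : Language α) * A ∧
    (∀ X Y : Language α, (∃ w, w ∈ X) → (∃ w, w ∈ Y) →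
      X * ({[c]} : Language α) * Y ≤
        (({[a]} : Language α) ⊔ {[b]}) * ({[c]} : Language α) * A →
      X ≤ (({[a]} : Language α) ⊔ {[b]}) ∧ Y ≤ A) := by
  have hcab : ∀ u ∈ ({[a]} : Language α) ⊔ {[b]}, c ∉ u := by
    rintro u (rfl | rfl) <;> simp [hac.symm, hbc.symm]
  exact ⟨rfl, fun _ _ => Language.le_and_le_of_mul_singleton_mul_le hcab hcA⟩

theorem perfect_typing_gadget {α : Type} (a b c : α)
    (hab : a ≠ b) (hac : a ≠ c) (hbc : b ≠ c)
    (A : Language α) (hA : ∃ w, w ∈ A) (hcA : ∀ w ∈ A, c ∉ w) :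
    (({[a]} : Language α) ⊔ {[b]}) * ({[c]} : Language α) * A =
      (({[a]} : Language α) ⊔ {[b]}) * ({[c]} : Language α) * A ∧
    (∀ X Y : Language α, (∃ w, w ∈ X) → (∃ w, w ∈ Y) →
      X * ({[c]} : Language α) * Y ≤
        (({[a]} : Language α) ⊔ {[b]}) * ({[c]} : Language α) * A →
      X ≤ (({[a]} : Language α) ⊔ {[b]}) ∧ Y ≤ A) :=
  perfect_typing_gadget_general a b c hac hbc A hcA
end

section
/- Let L be a language over Σ and w₀, w₁ words over Σ, and let P = {u : w₀ ++ u ++ w₁ ∈ L}. Then there exists a language X with {w₀}·X·{w₁} = L if and only if {w₀}·P·{w₁} = L; moreover in that case P is a perfect typing: P is local and every sound typing X (i.e., every X with {w₀}·X·{w₁} ⊆ L) satisfies X ⊆ P. -/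
/-- The two-sided quotient `{u : w₀ ++ u ++ w₁ ∈ L}`, as a language. -/
def twoSidedQuotient {α : Type} (L : Language α) (w₀ w₁ : List α) : Language α :=
  {u : List α | w₀ ++ u ++ w₁ ∈ L}

lemma mem_triple {α : Type} (X : Language α) (w₀ w₁ v : List α) :
    v ∈ ({w₀} : Language α) * X * {w₁} ↔ ∃ u ∈ X, v = w₀ ++ u ++ w₁ := by
  constructor
  · rintro ⟨ab, ⟨a, ha, b, hb, rfl⟩, c, hc, rfl⟩
    cases ha; cases hc
    exact ⟨b, hb, rfl⟩
  · rintro ⟨u, hu, rfl⟩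
    exact ⟨w₀ ++ u, ⟨w₀, rfl, u, hu, rfl⟩, w₁, rfl, rfl⟩

theorem quotient_perfect_typing {α : Type} (L : Language α) (w₀ w₁ : List α) :
    ((∃ X : Language α, ({w₀} : Language α) * X * {w₁} = L) ↔
      ({w₀} : Language α) * twoSidedQuotient L w₀ w₁ * {w₁} = L) ∧
    (({w₀} : Language α) * twoSidedQuotient L w₀ w₁ * {w₁} = L →
      (({w₀} : Language α) * twoSidedQuotient L w₀ w₁ * {w₁} = L ∧
        ∀ X : Language α, ({w₀} : Language α) * X * {w₁} ≤ L →
          X ≤ twoSidedQuotient L w₀ w₁)) := by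
  constructor
  · constructor
    · rintro ⟨X, hX⟩
      ext v
      rw [mem_triple]
      constructor
      · rintro ⟨u, hu, rfl⟩; exact hu
      · intro hv
        rw [← hX] at hv
        rw [mem_triple] at hv
        obtain ⟨u, hu, rfl⟩ := hv
        refine ⟨u, ?_, rfl⟩
        show w₀ ++ u ++ w₁ ∈ L
        rw [← hX]
        exact (mem_triple X w₀ w₁ _).2 ⟨u, hu, rfl⟩
    · intro h; exact ⟨_, h⟩
  · intro h
    refine ⟨h, fun X hX u hu => ?_⟩
    exact hX ((mem_triple X w₀ w₁ _).2 ⟨u, hu, rfl⟩)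
end

section
/- Let L be a nonempty language and w₀, w₁, w₂ words over Σ, and define Q₁ = {u : ∃ v, w₀ ++ u ++ w₁ ++ v ++ w₂ ∈ L} and Q₂ = {v : ∃ u, w₀ ++ u ++ w₁ ++ v ++ w₂ ∈ L}. Then a perfect typing for the design (L, w₀ f₁ w₁ f₂ w₂) exists if and only if {w₀}·Q₁·{w₁}·Q₂·{w₂} = L, and in that case (Q₁, Q₂) is the perfect typing. -/
/-!
The slot languages `Q₁ = firstSlot L w₀ w₁ w₂` and `Q₂ = secondSlot L w₀ w₁ w₂` contain every
component of a sound typing with nonempty components, and every singleton typing `({u}, {v})`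
with `w₀ u w₁ v w₂ ∈ L` is sound. Hence a perfect typing `(P₁, P₂)` satisfies
`Q₁ ⊆ P₁` and `Q₂ ⊆ P₂`, so `{w₀} Q₁ {w₁} Q₂ {w₂} ⊆ {w₀} P₁ {w₁} P₂ {w₂} = L`; the reverse
inclusion holds whenever `L` is covered by some product `{w₀} X {w₁} Y {w₂}`, because the
factors of a word of `L` lie in the slot languages by definition.
-/

/-- All words that can fill the first function slot of `w₀ f₁ w₁ f₂ w₂` in some word of `L`. -/
def firstSlot {α : Type} (L : Language α) (w₀ w₁ w₂ : List α) : Language α :=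
  {u : List α | ∃ v, w₀ ++ u ++ w₁ ++ v ++ w₂ ∈ L}

/-- All words that can fill the second function slot of `w₀ f₁ w₁ f₂ w₂` in some word of `L`. -/
def secondSlot {α : Type} (L : Language α) (w₀ w₁ w₂ : List α) : Language α :=
  {v : List α | ∃ u, w₀ ++ u ++ w₁ ++ v ++ w₂ ∈ L}

section Typing

variable {α : Type} {L X Y : Language α} {w₀ w₁ w₂ : List α}

lemma mem_kernel_iff {w : List α} :
    w ∈ ({w₀} : Language α) * X * {w₁} * Y * {w₂} ↔
      ∃ u ∈ X, ∃ v ∈ Y, w₀ ++ u ++ w₁ ++ v ++ w₂ = w := by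
  simp only [Language.mem_mul]
  constructor
  · rintro ⟨_, ⟨_, ⟨_, ⟨_, rfl, u, hu, rfl⟩, _, rfl, rfl⟩, v, hv, rfl⟩, _, rfl, rfl⟩
    exact ⟨u, hu, v, hv, rfl⟩
  · rintro ⟨u, hu, v, hv, rfl⟩
    exact ⟨_, ⟨_, ⟨_, ⟨_, rfl, u, hu, rfl⟩, _, rfl, rfl⟩, v, hv, rfl⟩, _, rfl, rfl⟩

lemma kernel_singleton_le {u v : List α} (h : w₀ ++ u ++ w₁ ++ v ++ w₂ ∈ L) :
    ({w₀} : Language α) * {u} * {w₁} * {v} * {w₂} ≤ L := by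
  rintro _ hw
  obtain ⟨_, rfl, _, rfl, rfl⟩ := mem_kernel_iff.1 hw
  exact h

lemma le_slots_of_sound (hX : ∃ w, w ∈ X) (hY : ∃ w, w ∈ Y)
    (h : ({w₀} : Language α) * X * {w₁} * Y * {w₂} ≤ L) :
    X ≤ firstSlot L w₀ w₁ w₂ ∧ Y ≤ secondSlot L w₀ w₁ w₂ := by
  obtain ⟨x, hx⟩ := hX
  obtain ⟨y, hy⟩ := hY
  exact ⟨fun u hu => ⟨y, h (mem_kernel_iff.2 ⟨u, hu, y, hy, rfl⟩)⟩,
    fun v hv => ⟨x, h (mem_kernel_iff.2 ⟨x, hx, v, hv, rfl⟩)⟩⟩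

lemma slots_le_of_perfect {P₁ P₂ : Language α}
    (hP : ∀ X Y : Language α, (∃ w, w ∈ X) → (∃ w, w ∈ Y) →
      ({w₀} : Language α) * X * {w₁} * Y * {w₂} ≤ L → X ≤ P₁ ∧ Y ≤ P₂) :
    firstSlot L w₀ w₁ w₂ ≤ P₁ ∧ secondSlot L w₀ w₁ w₂ ≤ P₂ := by
  have singleton_mem {u v : List α} (h : w₀ ++ u ++ w₁ ++ v ++ w₂ ∈ L) : u ∈ P₁ ∧ v ∈ P₂ :=
    let hP' := hP {u} {v} ⟨u, rfl⟩ ⟨v, rfl⟩ (kernel_singleton_le h)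
    ⟨hP'.1 rfl, hP'.2 rfl⟩
  exact ⟨fun _ ⟨_, h⟩ => (singleton_mem h).1, fun _ ⟨_, h⟩ => (singleton_mem h).2⟩

lemma le_kernel_slots (h : L ≤ ({w₀} : Language α) * X * {w₁} * Y * {w₂}) :
    L ≤ ({w₀} : Language α) * firstSlot L w₀ w₁ w₂ * {w₁} * secondSlot L w₀ w₁ w₂ * {w₂} := by
  intro w hw
  obtain ⟨u, -, v, -, rfl⟩ := mem_kernel_iff.1 (h hw)
  exact mem_kernel_iff.2 ⟨u, ⟨v, hw⟩, v, ⟨u, hw⟩, rfl⟩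

end Typing

theorem perfect_typing_exists_iff_general {α : Type} (L : Language α)
    (w₀ w₁ w₂ : List α) :
    ((∃ P₁ P₂ : Language α,
        ({w₀} : Language α) * P₁ * {w₁} * P₂ * {w₂} = L ∧
        ∀ X Y : Language α, (∃ w, w ∈ X) → (∃ w, w ∈ Y) →
          ({w₀} : Language α) * X * {w₁} * Y * {w₂} ≤ L → X ≤ P₁ ∧ Y ≤ P₂) ↔
      ({w₀} : Language α) * firstSlot L w₀ w₁ w₂ * {w₁} * secondSlot L w₀ w₁ w₂ * {w₂} = L) ∧
    (({w₀} : Language α) * firstSlot L w₀ w₁ w₂ * {w₁} * secondSlot L w₀ w₁ w₂ * {w₂} = L →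
      (∀ X Y : Language α, (∃ w, w ∈ X) → (∃ w, w ∈ Y) →
        ({w₀} : Language α) * X * {w₁} * Y * {w₂} ≤ L →
          X ≤ firstSlot L w₀ w₁ w₂ ∧ Y ≤ secondSlot L w₀ w₁ w₂)) := by
  refine ⟨⟨?_, fun h => ⟨_, _, h, fun _ _ => le_slots_of_sound⟩⟩, fun _ _ _ => le_slots_of_sound⟩
  rintro ⟨P₁, P₂, hP, hperfect⟩
  obtain ⟨hQ₁, hQ₂⟩ := slots_le_of_perfect hperfect
  refine le_antisymm ?_ (le_kernel_slots hP.ge)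
  calc ({w₀} : Language α) * firstSlot L w₀ w₁ w₂ * {w₁} * secondSlot L w₀ w₁ w₂ * {w₂}
      ≤ {w₀} * P₁ * {w₁} * P₂ * {w₂} := by gcongr
    _ = L := hP

theorem perfect_typing_exists_iff {α : Type} (L : Language α) (hL : ∃ w, w ∈ L)
    (w₀ w₁ w₂ : List α) :
    ((∃ P₁ P₂ : Language α,
        ({w₀} : Language α) * P₁ * {w₁} * P₂ * {w₂} = L ∧
        ∀ X Y : Language α, (∃ w, w ∈ X) → (∃ w, w ∈ Y) →
          ({w₀} : Language α) * X * {w₁} * Y * {w₂} ≤ L → X ≤ P₁ ∧ Y ≤ P₂) ↔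
      ({w₀} : Language α) * firstSlot L w₀ w₁ w₂ * {w₁} * secondSlot L w₀ w₁ w₂ * {w₂} = L) ∧
    (({w₀} : Language α) * firstSlot L w₀ w₁ w₂ * {w₁} * secondSlot L w₀ w₁ w₂ * {w₂} = L →
      (∀ X Y : Language α, (∃ w, w ∈ X) → (∃ w, w ∈ Y) →
        ({w₀} : Language α) * X * {w₁} * Y * {w₂} ≤ L →
          X ≤ firstSlot L w₀ w₁ w₂ ∧ Y ≤ secondSlot L w₀ w₁ w₂)) :=
  perfect_typing_exists_iff_general L w₀ w₁ w₂
end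

section
/- Let a, b, c be pairwise distinct letters and L = {[a]}*·{[b]}·{[c]}*. There is no pair of languages (P₁, P₂) such that P₁·P₂ = L and for all nonempty languages X, Y with X·Y ⊆ L one has X ⊆ P₁ and Y ⊆ P₂. That is, the design with target L and kernel string f₁ f₂ admits no perfect typing. -/
/-!
If `(P₁, P₂)` is a perfect typing of a nonempty target `L`, then the sound typings `(L, {ε})` and
`({ε}, L)` force `L ⊆ P₁` and `L ⊆ P₂`, hence `L · L ⊆ P₁ · P₂ = L`. For `L = a*·b·c*` this fails:
`bb ∈ L · L`, but every word of `L` contains exactly one `b`.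
-/

open Computability

namespace Language

variable {α : Type*}

def IsPerfectTyping (L P₁ P₂ : Language α) : Prop :=
  P₁ * P₂ = L ∧
    ∀ X Y : Language α, (∃ w, w ∈ X) → (∃ w, w ∈ Y) → X * Y ≤ L → X ≤ P₁ ∧ Y ≤ P₂

theorem IsPerfectTyping.mul_self_le {L P₁ P₂ : Language α} (h : IsPerfectTyping L P₁ P₂)
    (hL : ∃ w, w ∈ L) : L * L ≤ L := by
  have h₁ : L ≤ P₁ := (h.2 L 1 hL ⟨[], nil_mem_one⟩ (mul_one L).le).1
  have h₂ : L ≤ P₂ := (h.2 1 L ⟨[], nil_mem_one⟩ hL (one_mul L).le).2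
  calc L * L ≤ P₁ * P₂ := mul_le_mul' h₁ h₂
    _ = L := h.1

variable [DecidableEq α]

theorem count_eq_zero_of_mem_kstar_singleton {s t : α} (hst : s ≠ t) {w : List α}
    (hw : w ∈ ({[s]} : Language α)∗) : w.count t = 0 := by
  obtain ⟨S, rfl, hS⟩ := mem_kstar.mp hw
  refine List.count_eq_zero.mpr fun ht => ?_
  obtain ⟨v, hv, htv⟩ := List.mem_flatten.mp ht
  rw [show v = [s] from hS v hv, List.mem_singleton] at htv
  exact hst htv.symm

theorem count_eq_one_of_mem_kstar_mul_singleton_mul_kstar {a b c : α} (hab : a ≠ b)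
    (hcb : c ≠ b) {w : List α}
    (hw : w ∈ ({[a]} : Language α)∗ * ({[b]} : Language α) * ({[c]} : Language α)∗) :
    w.count b = 1 := by
  obtain ⟨_, ⟨x, hx, _, rfl, rfl⟩, z, hz, rfl⟩ := hw
  simp [count_eq_zero_of_mem_kstar_singleton hab hx, count_eq_zero_of_mem_kstar_singleton hcb hz]

end Language

theorem no_perfect_typing_astar_b_cstar_general {α : Type} (a b c : α)
    (hab : a ≠ b) (hbc : b ≠ c) :
    ¬ ∃ P₁ P₂ : Language α,
        P₁ * P₂ = ({[a]} : Language α)∗ * ({[b]} : Language α) * ({[c]} : Language α)∗ ∧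
        ∀ X Y : Language α, (∃ w, w ∈ X) → (∃ w, w ∈ Y) →
          X * Y ≤ ({[a]} : Language α)∗ * ({[b]} : Language α) * ({[c]} : Language α)∗ →
          X ≤ P₁ ∧ Y ≤ P₂ := by
  rintro ⟨P₁, P₂, hperfect⟩
  classical
  set L : Language α := ({[a]} : Language α)∗ * ({[b]} : Language α) * ({[c]} : Language α)∗
  have hbL : [b] ∈ L :=
    ⟨[b], Language.append_mem_mul (Language.nil_mem_kstar _) rfl, [], Language.nil_mem_kstar _, rfl⟩
  have hbbL : [b] ++ [b] ∈ L :=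
    Language.IsPerfectTyping.mul_self_le hperfect ⟨[b], hbL⟩ (Language.append_mem_mul hbL hbL)
  have hcount := Language.count_eq_one_of_mem_kstar_mul_singleton_mul_kstar hab hbc.symm hbbL
  simp at hcount

theorem no_perfect_typing_astar_b_cstar {α : Type} (a b c : α)
    (hab : a ≠ b) (hac : a ≠ c) (hbc : b ≠ c) :
    ¬ ∃ P₁ P₂ : Language α,
        P₁ * P₂ = ({[a]} : Language α)∗ * ({[b]} : Language α) * ({[c]} : Language α)∗ ∧
        ∀ X Y : Language α, (∃ w, w ∈ X) → (∃ w, w ∈ Y) →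
          X * Y ≤ ({[a]} : Language α)∗ * ({[b]} : Language α) * ({[c]} : Language α)∗ →
          X ≤ P₁ ∧ Y ≤ P₂ :=
  no_perfect_typing_astar_b_cstar_general a b c hab hbc
end

section
/- Let a, b, c be pairwise distinct letters and L = {[a]}*·{[b]}·{[c]}*. Then (L, {[c]}*) is a maximal local typing for the design (L, f₁ f₂): (i) L·{[c]}* = L; and (ii) if X, Y are languages with X·Y ⊆ L, L ⊆ X, and {[c]}* ⊆ Y, then X = L and Y = {[c]}*. -/
open Computability

/-!
Since `[] ∈ Y`, we get `X ⊆ X * Y ⊆ L`. Since `[b] ∈ L ⊆ X`, every `y ∈ Y` gives `b :: y ∈ L`;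
a word of `a∗ b c∗` that starts with `b ≠ a` has an empty `a∗`-part, so `y ∈ c∗`.
-/

namespace Language

variable {α : Type*}

theorem eq_of_mem_of_mem_kstar_singleton {a x : α} {w : List α}
    (hw : w ∈ ({[a]} : Language α)∗) (hx : x ∈ w) : x = a := by
  obtain ⟨L, rfl, hL⟩ := mem_kstar.1 hw
  obtain ⟨l, hl, hxl⟩ := List.mem_flatten.1 hx
  rw [show l = [a] from hL l hl] at hxl
  exact List.mem_singleton.1 hxl

theorem cons_mem_kstar_singleton_mul_singleton_mul_iff {a b : α} (hab : a ≠ b)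
    {M : Language α} {y : List α} :
    b :: y ∈ ({[a]} : Language α)∗ * {[b]} * M ↔ y ∈ M := by
  constructor
  · rintro ⟨_, ⟨u, hu, _, rfl, rfl⟩, q, hq, h⟩
    cases u with
    | nil =>
      obtain rfl : q = y := by simpa using h
      exact hq
    | cons x u =>
      have hxb : x = b := (List.cons.inj h).1
      exact absurd (hxb ▸ eq_of_mem_of_mem_kstar_singleton hu List.mem_cons_self) hab.symm
  · intro hy
    exact append_mem_mul (append_mem_mul (nil_mem_kstar _) (Set.mem_singleton [b])) hy

theorem mul_kstar_mul_kstar (l m : Language α) : l * m∗ * m∗ = l * m∗ := by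
  rw [mul_assoc, kstar_mul_kstar]

end Language

open Language

theorem maximal_local_typing_L_cstar_general {α : Type} (a b c : α)
    (hab : a ≠ b) :
    (({[a]} : Language α)∗ * ({[b]} : Language α) * ({[c]} : Language α)∗) *
        ({[c]} : Language α)∗ =
      ({[a]} : Language α)∗ * ({[b]} : Language α) * ({[c]} : Language α)∗ ∧
    (∀ X Y : Language α,
      X * Y ≤ ({[a]} : Language α)∗ * ({[b]} : Language α) * ({[c]} : Language α)∗ →
      ({[a]} : Language α)∗ * ({[b]} : Language α) * ({[c]} : Language α)∗ ≤ X →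
      ({[c]} : Language α)∗ ≤ Y →
      X = ({[a]} : Language α)∗ * ({[b]} : Language α) * ({[c]} : Language α)∗ ∧
      Y = ({[c]} : Language α)∗) := by
  refine ⟨mul_kstar_mul_kstar _ _, fun X Y hXY hLX hY => ?_⟩
  have hnil : [] ∈ Y := hY (nil_mem_kstar _)
  have hXL : X ≤ ({[a]} : Language α)∗ * {[b]} * {[c]}∗ := fun x hx =>
    hXY (List.append_nil x ▸ append_mem_mul hx hnil)
  refine ⟨le_antisymm hXL hLX, le_antisymm (fun y hy => ?_) hY⟩
  have hb : [b] ∈ X :=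
    hLX ((cons_mem_kstar_singleton_mul_singleton_mul_iff hab).2 (nil_mem_kstar _))
  exact (cons_mem_kstar_singleton_mul_singleton_mul_iff hab).1 (hXY (append_mem_mul hb hy))

theorem maximal_local_typing_L_cstar {α : Type} (a b c : α)
    (hab : a ≠ b) (hac : a ≠ c) (hbc : b ≠ c) :
    (({[a]} : Language α)∗ * ({[b]} : Language α) * ({[c]} : Language α)∗) *
        ({[c]} : Language α)∗ =
      ({[a]} : Language α)∗ * ({[b]} : Language α) * ({[c]} : Language α)∗ ∧
    (∀ X Y : Language α,
      X * Y ≤ ({[a]} : Language α)∗ * ({[b]} : Language α) * ({[c]} : Language α)∗ →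
      ({[a]} : Language α)∗ * ({[b]} : Language α) * ({[c]} : Language α)∗ ≤ X →
      ({[c]} : Language α)∗ ≤ Y →
      X = ({[a]} : Language α)∗ * ({[b]} : Language α) * ({[c]} : Language α)∗ ∧
      Y = ({[c]} : Language α)∗) :=
  maximal_local_typing_L_cstar_general a b c hab
end

section
/- Let a ≠ b be letters and L = ({[a]}·{[b]})⁺ (nonempty repetitions of the word ab). If X, Y are languages with X·Y ⊆ L, ({[a]}·{[b]})* ⊆ X, and ({[a]}·{[b]})⁺ ⊆ Y, then X = ({[a]}·{[b]})* and Y = ({[a]}·{[b]})⁺. In particular, (({ab})*, ({ab})⁺) is a maximal local typing for the design (L, f₁ f₂). -/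
open Computability

namespace Language

variable {α : Type*}

theorem singleton_mul_singleton (u v : List α) :
    ({u} : Language α) * {v} = {u ++ v} :=
  Set.image2_singleton

theorem append_mem_mul_singleton_iff {l : Language α} {x w : List α} :
    x ++ w ∈ l * {w} ↔ x ∈ l := by
  refine ⟨?_, fun hx => append_mem_mul hx rfl⟩
  rintro ⟨u, hu, _, rfl, h⟩
  rwa [← List.append_cancel_right h]

theorem kstar_mul_self_mul_kstar (l : Language α) : l∗ * (l * l∗) = l * l∗ := by
  rw [← mul_assoc, mul_self_kstar_comm, mul_assoc, kstar_mul_kstar]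

theorem eq_of_mul_le_of_nil_mem {l X Y : Language α} (hXY : X * Y ≤ l) (hX : [] ∈ X)
    (hY : l ≤ Y) : Y = l :=
  le_antisymm (fun _ hy => hXY (append_mem_mul hX hy)) hY

/-- Right cancellation of `w`: in `{w}⁺ = {w}∗ * {w}` the last factor is forced to be `w`. -/
theorem eq_kstar_of_mul_le {w : List α} {X Y : Language α} (hXY : X * Y ≤ {w} * {w}∗)
    (hX : {w}∗ ≤ X) (hw : w ∈ Y) : X = {w}∗ := by
  refine le_antisymm (fun x hx => (append_mem_mul_singleton_iff (w := w)).1 ?_) hX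
  rw [mul_self_kstar_comm]
  exact hXY (append_mem_mul hx hw)

end Language

theorem maximal_local_typing_abplus_general {α : Type} (a b : α) :
    (∀ X Y : Language α,
      X * Y ≤ (({[a]} : Language α) * {[b]}) * (({[a]} : Language α) * {[b]})∗ →
      (({[a]} : Language α) * {[b]})∗ ≤ X →
      (({[a]} : Language α) * {[b]}) * (({[a]} : Language α) * {[b]})∗ ≤ Y →
      X = (({[a]} : Language α) * {[b]})∗ ∧
      Y = (({[a]} : Language α) * {[b]}) * (({[a]} : Language α) * {[b]})∗) ∧
    (({[a]} : Language α) * {[b]})∗ *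
        ((({[a]} : Language α) * {[b]}) * (({[a]} : Language α) * {[b]})∗) =
      (({[a]} : Language α) * {[b]}) * (({[a]} : Language α) * {[b]})∗ := by
  rw [Language.singleton_mul_singleton]
  refine ⟨fun X Y hXY hX hY => ?_, Language.kstar_mul_self_mul_kstar _⟩
  have hnil : [] ∈ X := hX (Language.nil_mem_kstar _)
  have hab_mem : [a] ++ [b] ∈ Y := by
    have := hY (Language.append_mem_mul rfl (Language.nil_mem_kstar _))
    rwa [List.append_nil] at this
  exact ⟨Language.eq_kstar_of_mul_le hXY hX hab_mem, Language.eq_of_mul_le_of_nil_mem hXY hnil hY⟩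

theorem maximal_local_typing_abplus {α : Type} (a b : α) (hab : a ≠ b) :
    (∀ X Y : Language α,
      X * Y ≤ (({[a]} : Language α) * {[b]}) * (({[a]} : Language α) * {[b]})∗ →
      (({[a]} : Language α) * {[b]})∗ ≤ X →
      (({[a]} : Language α) * {[b]}) * (({[a]} : Language α) * {[b]})∗ ≤ Y →
      X = (({[a]} : Language α) * {[b]})∗ ∧
      Y = (({[a]} : Language α) * {[b]}) * (({[a]} : Language α) * {[b]})∗) ∧
    (({[a]} : Language α) * {[b]})∗ *
        ((({[a]} : Language α) * {[b]}) * (({[a]} : Language α) * {[b]})∗) =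
      (({[a]} : Language α) * {[b]}) * (({[a]} : Language α) * {[b]})∗ :=
  maximal_local_typing_abplus_general a b
end

section
/- Let a ≠ b be letters and L = ({[a]}·{[b]})*. Then ((ab)*, (ab)*) is a local typing (L·L = L), and ({[a]}, {[b]}) is a sound typing (({[a]})·({[b]}) ⊆ L), yet [a] ∉ L; consequently there is no perfect typing for the design (L, f₁ f₂), i.e., no pair (P₁,P₂) with P₁·P₂ = L such that every sound pair of nonempty languages is componentwise contained in (P₁,P₂). -/
open Computability

namespace Language

variable {α : Type*}

theorem length_dvd_of_mem_kstar {L : Language α} {n : ℕ} (hL : ∀ w ∈ L, w.length = n)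
    {w : List α} (hw : w ∈ L∗) : n ∣ w.length := by
  obtain ⟨S, rfl, hS⟩ := mem_kstar.mp hw
  rw [List.length_flatten]
  refine List.dvd_sum fun k hk => ?_
  obtain ⟨u, hu, rfl⟩ := List.mem_map.mp hk
  exact (hL u (hS u hu)).symm ▸ dvd_rfl

theorem length_of_mem_singleton_mul_singleton {u v w : List α}
    (hw : w ∈ ({u} : Language α) * {v}) : w.length = u.length + v.length := by
  obtain ⟨u', rfl, v', rfl, rfl⟩ := mem_mul.mp hw
  exact List.length_append

theorem singleton_notMem_kstar_singleton_mul_singleton (a b c : α) :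
    [c] ∉ (({[a]} : Language α) * {[b]})∗ := fun h =>
  absurd (length_dvd_of_mem_kstar (fun _ hw => length_of_mem_singleton_mul_singleton hw) h)
    (by simp)

/-- Since `(L, {ε})` is itself a sound typing, a perfect typing has `ε ∈ P₂`, so every
nonempty left component of a sound typing lies in `P₁ * {ε} ⊆ L`. -/
theorem IsPerfectTyping.le_of_mul_le {L P₁ P₂ X Y : Language α} (hP : IsPerfectTyping L P₁ P₂)
    (hX : ∃ w, w ∈ X) (hY : ∃ w, w ∈ Y) (hXY : X * Y ≤ L) : X ≤ L := by
  obtain ⟨x, hx⟩ := hX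
  obtain ⟨y, hy⟩ := hY
  have hL : ∃ w, w ∈ L := ⟨x ++ y, hXY (append_mem_mul hx hy)⟩
  have hXP₁ : X ≤ P₁ := (hP.2 X Y ⟨x, hx⟩ ⟨y, hy⟩ hXY).1
  have hP₂ : 1 ≤ P₂ := (hP.2 L 1 hL ⟨[], nil_mem_one⟩ (mul_one L).le).2
  calc X = X * 1 := (mul_one X).symm
    _ ≤ P₁ * P₂ := mul_le_mul' hXP₁ hP₂
    _ = L := hP.1

end Language

theorem no_perfect_typing_abstar_general {α : Type} (a b : α) :
    (({[a]} : Language α) * {[b]})∗ * (({[a]} : Language α) * {[b]})∗ =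
      (({[a]} : Language α) * {[b]})∗ ∧
    ({[a]} : Language α) * ({[b]} : Language α) ≤ (({[a]} : Language α) * {[b]})∗ ∧
    [a] ∉ (({[a]} : Language α) * {[b]})∗ ∧
    ¬ ∃ P₁ P₂ : Language α,
        P₁ * P₂ = (({[a]} : Language α) * {[b]})∗ ∧
        ∀ X Y : Language α, (∃ w, w ∈ X) → (∃ w, w ∈ Y) →
          X * Y ≤ (({[a]} : Language α) * {[b]})∗ → X ≤ P₁ ∧ Y ≤ P₂ := by
  have hna := Language.singleton_notMem_kstar_singleton_mul_singleton a b a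
  refine ⟨kstar_mul_kstar _, le_kstar, hna, ?_⟩
  rintro ⟨P₁, P₂, hP : Language.IsPerfectTyping _ P₁ P₂⟩
  have ha : ({[a]} : Language α) ≤ (({[a]} : Language α) * {[b]})∗ :=
    hP.le_of_mul_le (X := {[a]}) (Y := {[b]}) ⟨[a], rfl⟩ ⟨[b], rfl⟩ le_kstar
  exact hna (ha rfl)

theorem no_perfect_typing_abstar {α : Type} (a b : α) (hab : a ≠ b) :
    (({[a]} : Language α) * {[b]})∗ * (({[a]} : Language α) * {[b]})∗ =
      (({[a]} : Language α) * {[b]})∗ ∧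
    ({[a]} : Language α) * ({[b]} : Language α) ≤ (({[a]} : Language α) * {[b]})∗ ∧
    [a] ∉ (({[a]} : Language α) * {[b]})∗ ∧
    ¬ ∃ P₁ P₂ : Language α,
        P₁ * P₂ = (({[a]} : Language α) * {[b]})∗ ∧
        ∀ X Y : Language α, (∃ w, w ∈ X) → (∃ w, w ∈ Y) →
          X * Y ≤ (({[a]} : Language α) * {[b]})∗ → X ≤ P₁ ∧ Y ≤ P₂ :=
  no_perfect_typing_abstar_general a b
end
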